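/- arXiv:2008.05822 — 11 statements merged into one kernel-verified Lean document; each statement's English description precedes it below -/
import Mathlib

section
/- Let X be a compact Hausdorff space, ∼ a topologically quasiconvex equivalence relation on X, and ∼' an equivalence relation on X contained in ∼ (x ∼' y implies x ∼ y) such that for every q ∈ X the restriction of ∼' to the ∼-class [q] of q (equipped with the subspace topology, a compact Hausdorff space with its unique uniform structure) is topologically quasiconvex. Then ∼' is topologically quasiconvex. -/
/-- An equivalence relation (given as a binary relation) on a uniform space is
*topologically quasiconvex* if every class `{y | r x y}` is closed and, for every
entourage `u`, only finitely many classes fail to be `u`-small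
(`S` is `u`-small if `S ×ˢ S ⊆ u`). -/
def TopQuasiconvex {X : Type*} [UniformSpace X] (r : X → X → Prop) : Prop :=
  (∀ x : X, IsClosed {y | r x y}) ∧
    ∀ u ∈ uniformity X,
      {C : Set X | (∃ x : X, C = {y | r x y}) ∧ ¬C ×ˢ C ⊆ u}.Finite

/-- If `∼` is a topologically quasiconvex equivalence relation on a
compact Hausdorff space `X` and `∼'` is an equivalence relation contained in `∼` whose
restriction to every `∼`-class (with the subspace uniform structure) is topologically
quasiconvex, then `∼'` is topologically quasiconvex. -/
theorem topQuasiconvex_of_restriction {X : Type*}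
    [UniformSpace X] [CompactSpace X] [T2Space X]
    (r r' : X → X → Prop) (hr : Equivalence r) (hr' : Equivalence r')
    (hsub : ∀ x y : X, r' x y → r x y)
    (hqc : TopQuasiconvex r)
    (hqc' : ∀ q : X, TopQuasiconvex (fun a b : {y : X // r q y} => r' a.1 b.1)) :
    TopQuasiconvex r' := by
  constructor
  · intro x
    have hD : IsClosed {y : X | r x y} := hqc.1 x
    have hcl : IsClosed {b : {y : X // r x y} | r' x b.1} := by
      have h := (hqc' x).1 ⟨x, hr.refl x⟩
      exact h
    have himg : {y : X | r' x y} = Subtype.val '' {b : {y : X // r x y} | r' x b.1} := by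
      ext y
      constructor
      · intro hy
        exact ⟨⟨y, hsub _ _ hy⟩, hy, rfl⟩
      · rintro ⟨b, hb, rfl⟩; exact hb
    rw [himg]
    exact hD.isClosedEmbedding_subtypeVal.isClosedMap _ hcl
  · intro u hu
    have key : ∀ q : X, Set.Finite {C : Set X |
        (∃ x, C = {y | r' x y}) ∧ ¬C ×ˢ C ⊆ u ∧ C ⊆ {y | r q y}} := by
      intro q
      set Y := {y : X // r q y}
      have hu' : (fun p : Y × Y => (p.1.1, p.2.1)) ⁻¹' u ∈ uniformity Y := by
        rw [uniformity_subtype]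
        exact Filter.preimage_mem_comap hu
      have hfin := (hqc' q).2 _ hu'
      refine Set.Finite.subset (hfin.image (Set.image Subtype.val)) ?_
      rintro C ⟨⟨x, rfl⟩, hns, hsubD⟩
      have hx : r q x := hsubD (hr'.refl x)
      refine ⟨{b : Y | r' x b.1}, ⟨⟨⟨x, hx⟩, rfl⟩, ?_⟩, ?_⟩
      · intro hsm
        apply hns
        rintro ⟨y, z⟩ ⟨hy, hz⟩
        have hyq : r q y := hsubD hy
        have hzq : r q z := hsubD hz
        exact hsm (show ((⟨y, hyq⟩ : Y), (⟨z, hzq⟩ : Y)) ∈ _ from ⟨hy, hz⟩)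
      · ext y
        constructor
        · rintro ⟨b, hb, rfl⟩; exact hb
        · intro hy
          exact ⟨⟨y, hsubD hy⟩, hy, rfl⟩
    have hF := hqc.2 u hu
    have hbig : ∀ D ∈ {D : Set X | (∃ x, D = {y | r x y}) ∧ ¬D ×ˢ D ⊆ u},
        Set.Finite {C : Set X | (∃ x, C = {y | r' x y}) ∧ ¬C ×ˢ C ⊆ u ∧ C ⊆ D} := by
      rintro D ⟨⟨q, rfl⟩, -⟩
      exact key q
    refine Set.Finite.subset (hF.biUnion hbig) ?_
    rintro C ⟨⟨x, rfl⟩, hns⟩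
    have hDF : {y : X | r x y} ∈ {D : Set X | (∃ x, D = {y | r x y}) ∧ ¬D ×ˢ D ⊆ u} := by
      refine ⟨⟨x, rfl⟩, fun h => hns ?_⟩
      rintro ⟨y, z⟩ ⟨hy, hz⟩
      exact h ⟨hsub _ _ hy, hsub _ _ hz⟩
    rw [Set.mem_iUnion₂]
    exact ⟨{y | r x y}, hDF, ⟨x, rfl⟩, hns, fun y hy => hsub _ _ hy⟩
end

section
/- In the fiber-product setup, for every p ∈ P the restriction of the projection ϖ_p : X → X_p to the fiber π⁻¹({p}) is a homeomorphism onto π_p⁻¹({p}). -/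
/-- In the fiber-product setup, for every `p₀ ∈ P` the restriction of
the projection `ϖ_{p₀} : X → X_{p₀}` to the fiber `π⁻¹({p₀})` of the common map is a
homeomorphism onto the fiber `π_{p₀}⁻¹({p₀})`. -/
theorem projection_restricted_to_fiber_isHomeomorph {Z : Type*}
    [TopologicalSpace Z] [CompactSpace Z] [T2Space Z]
    (P : Set Z) (Xf : P → Type*) [∀ p, TopologicalSpace (Xf p)]
    [∀ p, CompactSpace (Xf p)] [∀ p, T2Space (Xf p)]
    (πf : (p : P) → Xf p → Z)
    (hcont : ∀ p, Continuous (πf p))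
    (hsurj : ∀ p, Function.Surjective (πf p))
    (hinj : ∀ p : P, Set.InjOn (πf p) {x | πf p x ≠ (p : Z)})
    (p₀ : P) :
    IsHomeomorph
      (fun x : {x : {x : (p : P) → Xf p // ∀ p q : P, πf p (x p) = πf q (x q)} //
          πf p₀ (x.1 p₀) = (p₀ : Z)} =>
        (⟨x.1.1 p₀, x.2⟩ : {y : Xf p₀ // πf p₀ y = (p₀ : Z)})) := by
  -- the total space is compact
  have hXclosed : IsClosed {x : (p : P) → Xf p | ∀ p q : P, πf p (x p) = πf q (x q)} := by
    have : {x : (p : P) → Xf p | ∀ p q : P, πf p (x p) = πf q (x q)} =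
        ⋂ (p : P) (q : P), {x | πf p (x p) = πf q (x q)} := by
      ext x; simp [Set.mem_iInter]
    rw [this]
    exact isClosed_iInter fun p => isClosed_iInter fun q =>
      isClosed_eq ((hcont p).comp (continuous_apply p)) ((hcont q).comp (continuous_apply q))
  haveI : CompactSpace {x : (p : P) → Xf p // ∀ p q : P, πf p (x p) = πf q (x q)} :=
    isCompact_iff_compactSpace.mp hXclosed.isCompact
  haveI : CompactSpace {x : {x : (p : P) → Xf p // ∀ p q : P, πf p (x p) = πf q (x q)} //
      πf p₀ (x.1 p₀) = (p₀ : Z)} := by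
    refine isCompact_iff_compactSpace.mp (IsClosed.isCompact ?_)
    exact isClosed_eq ((hcont p₀).comp ((continuous_apply p₀).comp continuous_subtype_val))
      continuous_const
  rw [isHomeomorph_iff_continuous_bijective]
  refine ⟨?_, ?_, ?_⟩
  · exact Continuous.subtype_mk
      ((continuous_apply p₀).comp (continuous_subtype_val.comp continuous_subtype_val)) _
  · rintro ⟨⟨x, hx⟩, hx0⟩ ⟨⟨y, hy⟩, hy0⟩ h
    simp only [Subtype.mk.injEq] at h ⊢
    funext p
    by_cases hp : p = p₀
    · subst hp; exact h
    · have hxp : πf p (x p) = (p₀ : Z) := (hx p p₀).trans hx0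
      have hyp : πf p (y p) = (p₀ : Z) := (hy p p₀).trans hy0
      have hne : (p₀ : Z) ≠ (p : Z) := fun hc => hp (Subtype.ext hc.symm)
      exact hinj p (by simp [hxp, hne]) (by simp [hyp, hne]) (hxp.trans hyp.symm)
  · rintro ⟨y, hy⟩
    classical
    refine ⟨⟨⟨fun p => if h : p = p₀ then h ▸ y else Classical.choose (hsurj p (p₀ : Z)),
      ?_⟩, ?_⟩, ?_⟩
    · intro p q
      have key : ∀ r : P, πf r (if h : r = p₀ then h ▸ y else
          Classical.choose (hsurj r (p₀ : Z))) = (p₀ : Z) := by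
        intro r
        by_cases h : r = p₀
        · subst h; simpa using hy
        · simp only [dif_neg h]; exact Classical.choose_spec (hsurj r (p₀ : Z))
      rw [key p, key q]
    · simpa using hy
    · simp
end

section
/- In the fiber-product setup, the equivalence relation ∼ on X defined by: x ∼ y if and only if x = y or there exists p ∈ P with π(x) = p and π(y) = p, is topologically quasiconvex. -/
/-- In the fiber-product setup, the equivalence relation on `X`
collapsing each fiber `π⁻¹({p})`, `p ∈ P`, of the common map (and nothing else) is
topologically quasiconvex. -/
theorem fiber_relation_topQuasiconvex {Z : Type*}
    [TopologicalSpace Z] [CompactSpace Z] [T2Space Z]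
    (P : Set Z) (Xf : P → Type*) [∀ p, UniformSpace (Xf p)]
    [∀ p, CompactSpace (Xf p)] [∀ p, T2Space (Xf p)]
    (πf : (p : P) → Xf p → Z)
    (hcont : ∀ p, Continuous (πf p))
    (hsurj : ∀ p, Function.Surjective (πf p))
    (hinj : ∀ p : P, Set.InjOn (πf p) {x | πf p x ≠ (p : Z)}) :
    TopQuasiconvex
      (fun x y : {x : (p : P) → Xf p // ∀ p q : P, πf p (x p) = πf q (x q)} =>
        x = y ∨ ∃ p : P, πf p (x.1 p) = (p : Z) ∧ πf p (y.1 p) = (p : Z)) := by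
  set X := {x : (p : P) → Xf p // ∀ p q : P, πf p (x p) = πf q (x q)} with hXdef
  have hc : ∀ p : P, Continuous (fun y : X => πf p (y.1 p)) := fun p =>
    (hcont p).comp ((continuous_apply p).comp continuous_subtype_val)
  -- class description when the fiber base point lies in P
  have classEq : ∀ (x : X) (p : P), πf p (x.1 p) = (p : Z) →
      {y : X | x = y ∨ ∃ q : P, πf q (x.1 q) = (q : Z) ∧ πf q (y.1 q) = (q : Z)}
        = {y : X | πf p (y.1 p) = (p : Z)} := by
    intro x p hp
    ext y
    constructor
    · rintro (rfl | ⟨q, hq1, hq2⟩)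
      · exact hp
      · have hqp : q = p := Subtype.ext (by rw [← hq1, ← hp]; exact x.2 q p)
        subst hqp
        exact hq2
    · intro hy
      exact Or.inr ⟨p, hp, hy⟩
  -- class description otherwise
  have classSing : ∀ x : X, (¬ ∃ p : P, πf p (x.1 p) = (p : Z)) →
      {y : X | x = y ∨ ∃ q : P, πf q (x.1 q) = (q : Z) ∧ πf q (y.1 q) = (q : Z)}
        = {x} := by
    intro x hx
    ext y
    constructor
    · rintro (rfl | ⟨q, hq1, _⟩)
      · rfl
      · exact absurd ⟨q, hq1⟩ hx
    · rintro rfl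
      exact Or.inl rfl
  -- compactness of X
  haveI : CompactSpace X := by
    have hcl : IsClosed {x : (p : P) → Xf p | ∀ p q : P, πf p (x p) = πf q (x q)} := by
      have : {x : (p : P) → Xf p | ∀ p q : P, πf p (x p) = πf q (x q)}
          = ⋂ (p : P) (q : P), {x : (p : P) → Xf p | πf p (x p) = πf q (x q)} := by
        ext x; simp [Set.mem_iInter]
      rw [this]
      exact isClosed_iInter fun p => isClosed_iInter fun q =>
        isClosed_eq ((hcont p).comp (continuous_apply p))
          ((hcont q).comp (continuous_apply q))
    exact isCompact_iff_compactSpace.mp hcl.isCompact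
  constructor
  · intro x
    by_cases hx : ∃ p : P, πf p (x.1 p) = (p : Z)
    · obtain ⟨p, hp⟩ := hx
      have := classEq x p hp
      simp only [Set.mem_setOf_eq] at this ⊢
      rw [show {y : X | x = y ∨ ∃ q : P, πf q (x.1 q) = (q : Z) ∧ πf q (y.1 q) = (q : Z)}
            = {y : X | πf p (y.1 p) = (p : Z)} from this]
      exact isClosed_eq (hc p) continuous_const
    · rw [show {y : X | x = y ∨ ∃ q : P, πf q (x.1 q) = (q : Z) ∧ πf q (y.1 q) = (q : Z)}
            = {x} from classSing x hx]
      exact isClosed_singleton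
  · intro u hu
    set fib : P → Set X := fun p => {y : X | πf p (y.1 p) = (p : Z)} with hfib
    have hBadFin : {p : P | ¬ (fib p ×ˢ fib p ⊆ u)}.Finite := by
      by_contra hfin
      rw [← Set.not_infinite, not_not] at hfin
      obtain ⟨v, ⟨hv, hvo⟩, hvu⟩ := (uniformity_hasBasis_open (α := X)).mem_iff.mp hu
      let e := hfin.natEmbedding
      set pn : ℕ → P := fun n => (e n : P) with hpn
      have pninj : Function.Injective pn := fun a b h => e.injective (Subtype.ext h)
      have hsel : ∀ n : ℕ, ∃ c : X × X,
          c.1 ∈ fib (pn n) ∧ c.2 ∈ fib (pn n) ∧ c ∉ u := by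
        intro n
        have hbad : ¬ (fib (pn n) ×ˢ fib (pn n) ⊆ u) := (e n).2
        obtain ⟨c, hcmem, hcu⟩ := Set.not_subset.mp hbad
        exact ⟨c, hcmem.1, hcmem.2, hcu⟩
      choose f hf1 hf2 hf3 using hsel
      haveI : Filter.NeBot (Filter.map f Filter.atTop) := Filter.map_neBot
      obtain ⟨c, hcc⟩ := exists_clusterPt_of_compactSpace (Filter.map f Filter.atTop)
      have key : ∀ S : Set (X × X), IsClosed S →
          (∀ᶠ n in Filter.atTop, f n ∈ S) → c ∈ S := by
        intro S hS hev
        have h1 : Filter.map f Filter.atTop ≤ Filter.principal S :=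
          Filter.le_principal_iff.mpr (Filter.mem_map.mpr hev)
        have := hcc.mono h1
        rw [← hS.closure_eq]
        exact mem_closure_iff_clusterPt.mpr this
      have hcoord : ∀ q : P, c.1.1 q = c.2.1 q := by
        intro q
        apply key {z : X × X | z.1.1 q = z.2.1 q}
        · exact isClosed_eq
            ((continuous_apply q).comp (continuous_subtype_val.comp continuous_fst))
            ((continuous_apply q).comp (continuous_subtype_val.comp continuous_snd))
        · have hpev : ∀ᶠ n in Filter.atTop, pn n ≠ q := by
            by_cases hq : ∃ n₀, pn n₀ = q
            · obtain ⟨n₀, h₀⟩ := hq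
              filter_upwards [Filter.eventually_gt_atTop n₀] with n hn hne
              exact hn.ne' (pninj (hne.trans h₀.symm))
            · exact Filter.Eventually.of_forall fun n hn => hq ⟨n, hn⟩
          filter_upwards [hpev] with n hn
          have hnz : ((pn n : P) : Z) ≠ (q : Z) := fun h => hn (Subtype.ext h)
          have hπx : πf q ((f n).1.1 q) = ((pn n : P) : Z) := by
            rw [(f n).1.2 q (pn n)]; exact hf1 n
          have hπy : πf q ((f n).2.1 q) = ((pn n : P) : Z) := by
            rw [(f n).2.2 q (pn n)]; exact hf2 n
          exact hinj q (by rw [Set.mem_setOf_eq, hπx]; exact hnz)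
            (by rw [Set.mem_setOf_eq, hπy]; exact hnz) (hπx.trans hπy.symm)
      have hceq : c.1 = c.2 := Subtype.ext (funext hcoord)
      have hcv : c ∈ v := by
        have h : (c.1, c.2) ∈ v := by rw [← hceq]; exact refl_mem_uniformity hv
        exact h
      have hcnv : c ∈ vᶜ :=
        key vᶜ hvo.isClosed_compl
          (Filter.Eventually.of_forall fun n hmem => hf3 n (hvu hmem))
      exact hcnv hcv
    apply Set.Finite.subset (hBadFin.image fib)
    rintro C ⟨⟨x, rfl⟩, hC⟩
    by_cases hx : ∃ p : P, πf p (x.1 p) = (p : Z)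
    · obtain ⟨p, hp⟩ := hx
      have hCeq : {y : X | x = y ∨ ∃ q : P, πf q (x.1 q) = (q : Z) ∧ πf q (y.1 q) = (q : Z)}
          = fib p := classEq x p hp
      refine ⟨p, ?_, hCeq.symm⟩
      rw [Set.mem_setOf_eq, ← hCeq]
      exact hC
    · exfalso
      apply hC
      rw [show {y : X | x = y ∨ ∃ q : P, πf q (x.1 q) = (q : Z) ∧ πf q (y.1 q) = (q : Z)}
            = {x} from classSing x hx]
      rintro ⟨a, b⟩ ⟨ha, hb⟩
      simp only [Set.mem_singleton_iff] at ha hb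
      subst ha; subst hb
      exact refl_mem_uniformity hu
end

section
/- Let W be a compact Hausdorff space, ∼ an equivalence relation on W, Z = W/∼ the quotient space with quotient map q : W → Z, and for each p ∈ Z let ∼_p be the equivalence relation on W defined by x ∼_p y iff x = y or (x ∼ y and q(x) ≠ p), with X_p = W/∼_p the quotient space. Then ∼ is topologically quasiconvex if and only if X_p is Hausdorff for every p ∈ Z. -/
/-- The equivalence relation `∼_p` on `W`: `x ∼_p y` iff `x = y`, or `x ∼ y` and the
`∼`-class of `x` is not `p` (i.e. `∼_p` collapses every `∼`-class except the one over
`p`). -/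
def relP {W : Type*} (s : Setoid W) (p : Quotient s) : Setoid W where
  r x y := x = y ∨ (s.r x y ∧ Quotient.mk s x ≠ p)
  iseqv := by
    refine ⟨fun x => Or.inl rfl, ?_, ?_⟩
    · rintro x y (rfl | ⟨hxy, hx⟩)
      · exact Or.inl rfl
      · exact Or.inr ⟨s.iseqv.symm hxy, fun h => hx ((Quotient.sound hxy).trans h)⟩
    · rintro x y z (rfl | ⟨hxy, hx⟩) h2
      · exact h2
      · rcases h2 with rfl | ⟨hyz, _⟩
        · exact Or.inr ⟨hxy, hx⟩
        · exact Or.inr ⟨s.iseqv.trans hxy hyz, hx⟩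



private lemma classEq {W : Type*} (s : Setoid W) {x y : W} (h : s.r x y) :
    {z | s.r x z} = {z | s.r y z} := by
  ext z
  exact ⟨fun hz => s.trans (s.symm h) hz, fun hz => s.trans h hz⟩

/-- The quotient of a compact Hausdorff space by an equivalence relation
with closed graph is Hausdorff. -/
private lemma t2_quotient_of_isClosed_graph {W : Type*} [TopologicalSpace W] [CompactSpace W]
    [T2Space W] (t : Setoid W) (hG : IsClosed {q : W × W | t.r q.1 q.2}) :
    T2Space (Quotient t) := by
  have hsat : ∀ C : Set W, IsClosed C →
      IsClosed (Quotient.mk t ⁻¹' (Quotient.mk t '' C)) := by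
    intro C hC
    have he : Quotient.mk t ⁻¹' (Quotient.mk t '' C)
        = Prod.fst '' ({q : W × W | t.r q.1 q.2} ∩ Set.univ ×ˢ C) := by
      ext x
      constructor
      · rintro ⟨c, hc, hec⟩
        exact ⟨(x, c), ⟨Quotient.exact hec.symm, Set.mem_univ _, hc⟩, rfl⟩
      · rintro ⟨⟨a, b⟩, ⟨hr, -, hb⟩, rfl⟩
        exact ⟨b, hb, (Quotient.sound hr).symm⟩
    rw [he]
    exact (((hG.inter (isClosed_univ.prod hC)).isCompact).image continuous_fst).isClosed
  constructor
  intro A B hAB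
  obtain ⟨x, rfl⟩ := Quotient.exists_rep A
  obtain ⟨y, rfl⟩ := Quotient.exists_rep B
  have hK1 : IsClosed {z | t.r x z} := hG.preimage (Continuous.prodMk_right x)
  have hK2 : IsClosed {z | t.r y z} := hG.preimage (Continuous.prodMk_right y)
  have hdisj : Disjoint {z | t.r x z} {z | t.r y z} := by
    rw [Set.disjoint_left]
    intro z hz1 hz2
    exact hAB (Quotient.sound (t.trans hz1 (t.symm hz2)))
  obtain ⟨U, V, hUo, hVo, hKU, hKV, hUV⟩ :=
    SeparatedNhds.of_isCompact_isCompact hK1.isCompact hK2.isCompact hdisj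
  refine ⟨(Quotient.mk t '' Uᶜ)ᶜ, (Quotient.mk t '' Vᶜ)ᶜ, ?_, ?_, ?_, ?_, ?_⟩
  · rw [← isQuotientMap_quotient_mk'.isOpen_preimage]
    rw [Set.preimage_compl]
    exact (hsat _ hUo.isClosed_compl).isOpen_compl
  · rw [← isQuotientMap_quotient_mk'.isOpen_preimage]
    rw [Set.preimage_compl]
    exact (hsat _ hVo.isClosed_compl).isOpen_compl
  · rintro ⟨c, hc, hec⟩
    exact hc (hKU (t.symm (Quotient.exact hec)))
  · rintro ⟨c, hc, hec⟩
    exact hc (hKV (t.symm (Quotient.exact hec)))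
  · rw [Set.disjoint_left]
    rintro z hz1 hz2
    obtain ⟨w, rfl⟩ := Quotient.exists_rep z
    have hwU : w ∈ U := by
      by_contra hw
      exact hz1 ⟨w, hw, rfl⟩
    have hwV : w ∈ V := by
      by_contra hw
      exact hz2 ⟨w, hw, rfl⟩
    exact Set.disjoint_left.mp hUV hwU hwV

private lemma exists_closed_entourage_notMem {W : Type*} [UniformSpace W] [T2Space W]
    {a b : W} (h : a ≠ b) : ∃ v ∈ uniformity W, IsClosed v ∧ (a, b) ∉ v := by
  obtain ⟨U, V, hUo, hVo, haU, hbV, hUV⟩ := t2_separation h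
  have hU : U ∈ nhds a := hUo.mem_nhds haU
  obtain ⟨V', hV', hball⟩ := UniformSpace.mem_nhds_iff.mp hU
  obtain ⟨w, ⟨hw𝓤, hwcl⟩, hwV⟩ := uniformity_hasBasis_closed.mem_iff.1 hV'
  refine ⟨w, hw𝓤, hwcl, fun hab => ?_⟩
  have : b ∈ U := hball (hwV hab)
  exact Set.disjoint_left.mp hUV this hbV

/-- For a compact Hausdorff space `W` and an equivalence relation
`∼` on `W`, the relation `∼` is topologically quasiconvex if and only if every
quotient `X_p = W/∼_p`, `p ∈ W/∼`, is Hausdorff. -/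
theorem topQuasiconvex_iff_quotients_t2 {W : Type*}
    [UniformSpace W] [CompactSpace W] [T2Space W] (s : Setoid W) :
    TopQuasiconvex s.r ↔ ∀ p : Quotient s, T2Space (Quotient (relP s p)) := by
  constructor
  · rintro ⟨hcl, hfin⟩ p
    refine t2_quotient_of_isClosed_graph _ ?_
    have key : {q : W × W | (relP s p).r q.1 q.2} =
        ⋂ v ∈ {v : Set (W × W) | v ∈ uniformity W ∧ IsClosed v},
          (Set.diagonal W ∪ v ∪
            ⋃ C ∈ {C : Set W | (∃ x, C = {y | s.r x y} ∧ Quotient.mk s x ≠ p)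
                ∧ ¬C ×ˢ C ⊆ v}, C ×ˢ C) := by
      apply Set.Subset.antisymm
      · rintro ⟨a, b⟩ hab
        rw [Set.mem_iInter₂]
        intro v hv
        rcases (hab : a = b ∨ (s.r a b ∧ Quotient.mk s a ≠ p)) with heq | ⟨hr, hp⟩
        · exact Or.inl (Or.inl heq)
        · by_cases hsmall : {y | s.r a y} ×ˢ {y | s.r a y} ⊆ v
          · exact Or.inl (Or.inr (hsmall ⟨s.refl a, hr⟩))
          · exact Or.inr (Set.mem_biUnion ⟨⟨a, rfl, hp⟩, hsmall⟩ ⟨s.refl a, hr⟩)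
      · rintro ⟨a, b⟩ hab
        by_cases heq : a = b
        · exact Or.inl heq
        obtain ⟨v, hv𝓤, hvcl, hvab⟩ := exists_closed_entourage_notMem heq
        have := Set.mem_iInter₂.mp hab v ⟨hv𝓤, hvcl⟩
        rcases this with (hd | hd) | hd
        · exact absurd hd heq
        · exact absurd hd hvab
        · obtain ⟨C, ⟨⟨x, rfl, hxp⟩, -⟩, ha, hb⟩ := Set.mem_iUnion₂.mp hd
          refine Or.inr ⟨s.trans (s.symm ha) hb, ?_⟩
          rwa [Quotient.sound (s.symm ha : s.r a x)]
    rw [key]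
    refine isClosed_biInter fun v hv => ?_
    refine (isClosed_diagonal.union hv.2).union ?_
    refine Set.Finite.isClosed_biUnion ?_ ?_
    · exact (hfin v hv.1).subset fun C hC => ⟨⟨(hC.1).choose, (hC.1).choose_spec.1⟩, hC.2⟩
    · rintro C ⟨⟨x, rfl, -⟩, -⟩
      exact (hcl x).prod (hcl x)
  · intro h
    constructor
    · -- classes are closed
      intro x
      by_cases h1 : ∀ w, s.r x w
      · have : {y | s.r x y} = Set.univ := Set.eq_univ_of_forall h1
        rw [this]; exact isClosed_univ
      push_neg at h1
      obtain ⟨w, hw⟩ := h1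
      set p := Quotient.mk s w with hp
      have hxp : Quotient.mk s x ≠ p := fun hh => hw (Quotient.exact hh)
      haveI := h p
      have : {y | s.r x y} = Quotient.mk (relP s p) ⁻¹' {Quotient.mk (relP s p) x} := by
        ext y
        simp only [Set.mem_preimage, Set.mem_singleton_iff, Set.mem_setOf_eq]
        constructor
        · intro hy
          refine Quotient.sound (Or.inr ⟨s.symm hy, ?_⟩)
          rwa [Quotient.sound (s.symm hy : s.r y x)]
        · intro hy
          rcases (Quotient.exact hy : y = x ∨ (s.r y x ∧ Quotient.mk s y ≠ p)) with heq | ⟨hr, -⟩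
          · rw [heq]
          · exact s.symm hr
      rw [this]
      exact (isClosed_singleton).preimage continuous_quotient_mk'
    · -- finiteness
      intro u hu
      by_contra hinf
      rw [← Set.not_infinite, not_not] at hinf
      set S := {C : Set W | (∃ x : W, C = {y | s.r x y}) ∧ ¬C ×ˢ C ⊆ u} with hS
      have hgex : ∀ c : ↥S, ∃ q : W × W, s.r q.1 q.2 ∧ q ∉ u
          ∧ (c : Set W) = {y | s.r q.1 y} := by
        rintro ⟨C, ⟨x, rfl⟩, hCu⟩
        obtain ⟨q, hq, hqu⟩ := Set.not_subset.mp hCu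
        exact ⟨q, s.trans (s.symm hq.1) hq.2, hqu, classEq s hq.1⟩
      choose g hg1 hg2 hg3 using hgex
      haveI : Infinite ↥S := hinf.to_subtype
      have hle : Filter.map g Filter.cofinite ≤ Filter.principal Set.univ := by
        simp
      obtain ⟨⟨a, b⟩, -, hz⟩ := isCompact_univ.exists_clusterPt hle
      have hclosure : (a, b) ∈ closure uᶜ := by
        rw [mem_closure_iff_clusterPt]
        exact hz.mono (Filter.le_principal_iff.mpr
          (Filter.mem_map.mpr (Filter.univ_mem' fun c => hg2 c)))
      have hne : a ≠ b := by
        rintro rfl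
        have hu' : u ∈ nhds ((a : W), a) := nhds_le_uniformity a hu
        have hint : (a, a) ∈ interior u := mem_interior_iff_mem_nhds.mpr hu'
        obtain ⟨q, hq1, hq2⟩ := mem_closure_iff.mp hclosure _ isOpen_interior hint
        exact hq2 (interior_subset hq1)
      set p := Quotient.mk s a with hpdef
      haveI := h p
      set π : W → Quotient (relP s p) := Quotient.mk (relP s p) with hπ
      have hcont : Continuous (fun q : W × W => (π q.1, π q.2)) :=
        (continuous_quotient_mk'.comp continuous_fst).prodMk
          (continuous_quotient_mk'.comp continuous_snd)
      have hmcl : ClusterPt (π a, π b)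
          (Filter.map ((fun q : W × W => (π q.1, π q.2)) ∘ g) Filter.cofinite) := by
        have := (mapClusterPt_def.mpr hz).continuousAt_comp (f := fun q : W × W => (π q.1, π q.2))
          hcont.continuousAt
        exact mapClusterPt_def.mp this
      have hdiagmem : {q : Quotient (relP s p) × Quotient (relP s p) | q.1 = q.2}
          ∈ Filter.map ((fun q : W × W => (π q.1, π q.2)) ∘ g) Filter.cofinite := by
        rw [Filter.mem_map, Filter.mem_cofinite]
        have hsub : (((fun q : W × W => (π q.1, π q.2)) ∘ g) ⁻¹'
            {q : Quotient (relP s p) × Quotient (relP s p) | q.1 = q.2})ᶜ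
            ⊆ {c : ↥S | Quotient.mk s (g c).1 = p} := by
          intro c hc
          by_contra hcp
          exact hc (Quotient.sound (Or.inr ⟨hg1 c, hcp⟩))
        refine Set.Finite.subset ?_ hsub
        apply Set.Subsingleton.finite
        intro c hc c' hc'
        have : s.r (g c).1 (g c').1 := Quotient.exact (hc.trans hc'.symm)
        have hcc : (c : Set W) = (c' : Set W) := by
          rw [hg3 c, hg3 c', classEq s this]
        exact Subtype.ext hcc
      have hmemcl : (π a, π b) ∈ closure
          {q : Quotient (relP s p) × Quotient (relP s p) | q.1 = q.2} := by
        rw [mem_closure_iff_clusterPt]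
        exact hmcl.mono (Filter.le_principal_iff.mpr hdiagmem)
      have hπab : π a = π b := by
        have hcl2 : IsClosed {q : Quotient (relP s p) × Quotient (relP s p) | q.1 = q.2} :=
          isClosed_diagonal
        exact hcl2.closure_subset hmemcl
      rcases (Quotient.exact hπab : a = b ∨ (s.r a b ∧ Quotient.mk s a ≠ p)) with rfl | ⟨-, hp2⟩
      · exact hne rfl
      · exact hp2 hpdef.symm
end

section
/- Let X be a compact metrizable space, C the Cantor space (the product space ℕ → Bool), and π : X → C a continuous surjective map. Let P ⊆ C be a countable subset such that for every p ∈ C ∖ P the fiber π⁻¹({p}) is a single point, and for every p ∈ P the set X ∖ π⁻¹({p}) is dense in X. Then for every dense subset D ⊆ C, the set π⁻¹(D) is dense in X. -/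
/-- Let `X` be a compact metrizable space, `C = ℕ → Bool` the Cantor
space, and `π : X → C` a continuous surjection. Suppose `P ⊆ C` is countable, the
fiber over every point outside `P` is a single point, and for every `p ∈ P` the
complement of the fiber over `p` is dense in `X`. Then the preimage of every dense
subset of `C` is dense in `X`. -/
theorem preimage_dense_of_dense {X : Type*}
    [TopologicalSpace X] [CompactSpace X] [TopologicalSpace.MetrizableSpace X]
    (π : X → (ℕ → Bool)) (hcont : Continuous π) (hsurj : Function.Surjective π)
    (P : Set (ℕ → Bool)) (hP : P.Countable)
    (hfib : ∀ p ∉ P, ∃ x : X, π ⁻¹' {p} = {x})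
    (hdense : ∀ p ∈ P, Dense (π ⁻¹' {p})ᶜ)
    (D : Set (ℕ → Bool)) (hD : Dense D) :
    Dense (π ⁻¹' D) := by
  letI := TopologicalSpace.metrizableSpaceMetric X
  haveI : BaireSpace X := inferInstance
  rw [dense_iff_inter_open]
  intro U hU hUne
  -- The union of the fibers over `P` has dense complement, by Baire.
  have hBaire : Dense (⋂ p ∈ P, (π ⁻¹' {p})ᶜ) := by
    exact dense_biInter_of_isOpen
      (fun p _ => (IsClosed.preimage hcont isClosed_singleton).isOpen_compl)
      hP (fun p hp => hdense p hp)
  -- Find a point of `U` whose image is not in `P`.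
  obtain ⟨x, hxU, hxI⟩ := hBaire.inter_open_nonempty U hU hUne
  have hπx : π x ∉ P := fun hpx => Set.mem_iInter₂.1 hxI (π x) hpx rfl
  obtain ⟨x', hx'⟩ := hfib (π x) hπx
  have hxx' : x' = x := by
    have h : x ∈ π ⁻¹' {π x} := rfl
    rw [hx'] at h
    exact h.symm
  -- W = complement of π(Uᶜ) is open, contains π x
  have hclosedmap : IsClosedMap π := hcont.isClosedMap
  have hW : IsOpen (π '' Uᶜ)ᶜ := (hclosedmap _ hU.isClosed_compl).isOpen_compl
  have hcW : π x ∈ (π '' Uᶜ)ᶜ := by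
    rintro ⟨y, hyU, hyπ⟩
    have h : y ∈ π ⁻¹' {π x} := hyπ
    rw [hx'] at h
    exact hyU (h ▸ (hxx' ▸ hxU))
  obtain ⟨d, hdW, hdD⟩ := hD.inter_open_nonempty _ hW ⟨π x, hcW⟩
  obtain ⟨y, hy⟩ := hsurj d
  have hyU : y ∈ U := by
    by_contra hyU
    exact hdW ⟨y, hyU, hy⟩
  exact ⟨y, hyU, show π y ∈ D from hy ▸ hdD⟩
end

section
/- Let G be a group acting by homeomorphisms on a compact Hausdorff space X (each map x ↦ g·x is a homeomorphism), K ⊆ X a closed subset, and H = {g ∈ G : g·K = K} (a subgroup of G). Assume that for all g₁, g₂ ∈ G the sets g₁·K and g₂·K are either disjoint or equal. Define the relation ∼ on X by: x ∼ y iff x = y or there exists g ∈ G with x ∈ g·K and y ∈ g·K (this is an equivalence relation under the stated assumption). Then the following are equivalent: (i) K is dynamically quasiconvex, i.e. for every entourage u ∈ 𝓤(X) the set of left cosets {gH : g·K is not u-small} is finite; (ii) ∼ is topologically quasiconvex. -/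
open Pointwise

/-- Let a group `G` act by homeomorphisms on a compact Hausdorff
space `X`, let `K ⊆ X` be closed with setwise stabilizer `H`, and suppose any two
translates of `K` are disjoint or equal. Then `K` is dynamically quasiconvex (for
every entourage `u`, only finitely many cosets `gH` have `g • K` not `u`-small) if
and only if the relation identifying the points of each translate of `K` is
topologically quasiconvex. -/
theorem dynQuasiconvex_iff_topQuasiconvex {G X : Type*} [Group G]
    [UniformSpace X] [CompactSpace X] [T2Space X]
    [MulAction G X] [ContinuousConstSMul G X]
    (K : Set X) (hK : IsClosed K)
    (hdisj : ∀ g₁ g₂ : G, Disjoint (g₁ • K) (g₂ • K) ∨ g₁ • K = g₂ • K) :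
    (∀ u ∈ uniformity X,
        ((QuotientGroup.mk : G → G ⧸ MulAction.stabilizer G K) ''
          {g : G | ¬(g • K) ×ˢ (g • K) ⊆ u}).Finite) ↔
      TopQuasiconvex (fun x y : X => x = y ∨ ∃ g : G, x ∈ g • K ∧ y ∈ g • K) := by
  set H := MulAction.stabilizer G K with hH
  -- the descended "translate" map on the quotient
  have fwd : ∀ a b : G, a⁻¹ * b ∈ H → a • K = b • K := by
    intro a b hab
    have h1 : (a⁻¹ * b) • K = K := hab
    calc a • K = a • ((a⁻¹ * b) • K) := by rw [h1]
      _ = b • K := by rw [smul_smul, mul_inv_cancel_left]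
  let f : G ⧸ H → Set X := fun q =>
    Quotient.liftOn' q (fun g => g • K) (fun a b h =>
      fwd a b (QuotientGroup.leftRel_apply.mp h))
  have hfmk : ∀ g : G, f (QuotientGroup.mk g) = g • K := fun g => rfl
  have finj : Function.Injective f := by
    intro q₁ q₂ h
    induction q₁ using QuotientGroup.induction_on with
    | H g₁ =>
    induction q₂ using QuotientGroup.induction_on with
    | H g₂ =>
    rw [hfmk, hfmk] at h
    rw [QuotientGroup.eq]
    show (g₁⁻¹ * g₂) • K = K
    rw [mul_smul, ← h, inv_smul_smul]
  -- class descriptions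
  have hclass : ∀ (x : X) (g : G), x ∈ g • K →
      {y | x = y ∨ ∃ g' : G, x ∈ g' • K ∧ y ∈ g' • K} = g • K := by
    intro x g hg
    ext y
    simp only [Set.mem_setOf_eq]
    constructor
    · rintro (rfl | ⟨g', hx', hy'⟩)
      · exact hg
      · rcases hdisj g' g with hd | he
        · exact absurd rfl (hd.ne_of_mem hx' hg)
        · exact he ▸ hy'
    · intro hy
      exact Or.inr ⟨g, hg, hy⟩
  have hclass' : ∀ x : X, (¬∃ g : G, x ∈ g • K) →
      {y | x = y ∨ ∃ g' : G, x ∈ g' • K ∧ y ∈ g' • K} = {x} := by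
    intro x hx
    ext y
    simp only [Set.mem_setOf_eq, Set.mem_singleton_iff]
    constructor
    · rintro (rfl | ⟨g', hx', _⟩)
      · rfl
      · exact absurd ⟨g', hx'⟩ hx
    · rintro rfl
      exact Or.inl rfl
  constructor
  · -- dyn ⇒ top
    intro hdyn
    constructor
    · intro x
      by_cases hx : ∃ g : G, x ∈ g • K
      · obtain ⟨g, hg⟩ := hx
        rw [hclass x g hg]
        exact hK.smul g
      · rw [hclass' x hx]
        exact isClosed_singleton
    · intro u hu
      refine Set.Finite.subset ((hdyn u hu).image f) ?_
      rintro C ⟨⟨x, rfl⟩, hC⟩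
      by_cases hx : ∃ g : G, x ∈ g • K
      · obtain ⟨g, hg⟩ := hx
        refine ⟨QuotientGroup.mk g, ⟨g, ?_, rfl⟩, ?_⟩
        · intro hsub
          exact hC ((hclass x g hg) ▸ hsub)
        · rw [hfmk, hclass x g hg]
      · exfalso
        apply hC
        rw [hclass' x hx]
        rintro ⟨a, b⟩ ⟨ha, hb⟩
        simp only [Set.mem_singleton_iff] at ha hb
        rw [ha, hb]
        exact refl_mem_uniformity hu
  · -- top ⇒ dyn
    rintro ⟨_, hfin⟩ u hu
    refine Set.Finite.of_finite_image (Set.Finite.subset (hfin u hu) ?_) finj.injOn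
    rintro C ⟨q, ⟨g, hg, rfl⟩, rfl⟩
    rw [hfmk]
    have hne : (g • K).Nonempty := by
      rcases Set.eq_empty_or_nonempty (g • K) with he | hne
      · exact absurd (by rw [he]; simp) hg
      · exact hne
    obtain ⟨x, hx⟩ := hne
    exact ⟨⟨x, (hclass x g hx).symm⟩, hg⟩
end

section
/- Let a boundary compactification model of a group G on a compact Hausdorff space X be given and assume it is perspective. Let H ≤ G be a subgroup such that for all g₁, g₂ ∈ G the sets ∂(g₁H) and ∂(g₂H) are either disjoint or equal, and let ∼ be the relation on X defined by: x ∼ y iff x = y or there exists g ∈ G with x ∈ ∂(gH) and y ∈ ∂(gH) (an equivalence relation under the stated assumption). Call H dynamically quasiconvex if for every entourage u ∈ 𝓤(X) the set of left cosets {gH : ∂(gH) is not u-small} is finite. Then: (a) if H is dynamically quasiconvex, then ∼ is topologically quasiconvex; and (b) if moreover ∂(gH) ≠ ∂(H) for every g ∉ H, then ∼ being topologically quasiconvex implies that H is dynamically quasiconvex. -/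
open Pointwise

/-- A *boundary compactification model* of a group `G` on a space `X` carrying an
action of `G`: an injective map `emb : G → X` with open range, discrete in the
subspace topology, such that the action extends the left multiplication of `G`. -/
structure BoundaryModel (G X : Type*) [Group G] [TopologicalSpace X]
    [MulAction G X] where
  emb : G → X
  inj : Function.Injective emb
  open_range : IsOpen (Set.range emb)
  discrete_range : ∀ g : G, ∃ U : Set X, IsOpen U ∧ U ∩ Set.range emb = {emb g}
  smul_emb : ∀ g h : G, g • emb h = emb (g * h)

/-- The boundary `∂(S) = closure(emb S) ∩ (X ∖ emb G)` of a subset `S ⊆ G`. -/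
def BoundaryModel.bd {G X : Type*} [Group G] [TopologicalSpace X] [MulAction G X]
    (M : BoundaryModel G X) (S : Set G) : Set X :=
  closure (M.emb '' S) ∩ (Set.range M.emb)ᶜ

/-- The model is *perspective* if for every entourage `u` and every finite `F ⊆ G`,
only finitely many `g` have `emb (gF)` not `u`-small. -/
def BoundaryModel.Perspective {G X : Type*} [Group G] [UniformSpace X]
    [MulAction G X] (M : BoundaryModel G X) : Prop :=
  ∀ u ∈ uniformity X, ∀ F : Finset G,
    {g : G | ¬((fun f => M.emb (g * f)) '' (F : Set G)) ×ˢ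
        ((fun f => M.emb (g * f)) '' (F : Set G)) ⊆ u}.Finite

/-- A subgroup `H ≤ G` is *dynamically quasiconvex* if for every entourage `u`, only
finitely many cosets `gH` have `∂(gH)` not `u`-small. -/
def BoundaryModel.DynQC {G X : Type*} [Group G] [UniformSpace X] [MulAction G X]
    (M : BoundaryModel G X) (H : Subgroup G) : Prop :=
  ∀ u ∈ uniformity X,
    ((QuotientGroup.mk : G → G ⧸ H) ''
      {g : G | ¬(M.bd (g • (H : Set G))) ×ˢ (M.bd (g • (H : Set G))) ⊆ u}).Finite

section Aux

variable {G X : Type*} [Group G] [TopologicalSpace X] [MulAction G X]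

/-- `∂ S` is closed. -/
lemma BoundaryModel.bd_closed (M : BoundaryModel G X) (S : Set G) :
    IsClosed (M.bd S) :=
  isClosed_closure.inter M.open_range.isClosed_compl

lemma BoundaryModel.smul_range (M : BoundaryModel G X) (g : G) :
    g • Set.range M.emb = Set.range M.emb := by
  ext x
  constructor
  · rintro ⟨-, ⟨h, rfl⟩, rfl⟩
    exact ⟨g * h, (M.smul_emb g h).symm⟩
  · rintro ⟨h, rfl⟩
    exact ⟨M.emb (g⁻¹ * h), ⟨g⁻¹ * h, rfl⟩, by
      show g • M.emb (g⁻¹ * h) = M.emb h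
      rw [M.smul_emb, mul_inv_cancel_left]⟩

lemma BoundaryModel.image_smul_set (M : BoundaryModel G X) (g : G) (S : Set G) :
    M.emb '' (g • S) = g • (M.emb '' S) := by
  ext x
  constructor
  · rintro ⟨-, ⟨s, hs, rfl⟩, rfl⟩
    refine ⟨M.emb s, ⟨s, hs, rfl⟩, ?_⟩
    show g • M.emb s = M.emb (g • s)
    rw [M.smul_emb]; rfl
  · rintro ⟨-, ⟨s, hs, rfl⟩, rfl⟩
    exact ⟨g • s, ⟨s, hs, rfl⟩, (M.smul_emb g s).symm⟩

/-- Equivariance of the boundary. -/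
lemma BoundaryModel.bd_smul [ContinuousConstSMul G X] (M : BoundaryModel G X)
    (g : G) (S : Set G) :
    M.bd (g • S) = g • M.bd S := by
  unfold BoundaryModel.bd
  rw [M.image_smul_set, closure_smul, Set.smul_set_inter]
  congr 1
  rw [Set.smul_set_compl, M.smul_range]

end Aux

lemma coset_eq_of_mk_eq {G : Type*} [Group G] {H : Subgroup G} {g₁ g₂ : G}
    (h : (QuotientGroup.mk g₁ : G ⧸ H) = QuotientGroup.mk g₂) :
    g₁ • (H : Set G) = g₂ • (H : Set G) := by
  have hm : g₁⁻¹ * g₂ ∈ H := QuotientGroup.eq.mp h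
  have : g₂ • (H : Set G) = (g₁ * (g₁⁻¹ * g₂)) • (H : Set G) := by
    rw [mul_inv_cancel_left]
  rw [this, mul_smul, smul_coe_set hm]

/-- For a perspective boundary compactification model of `G` on a
compact Hausdorff space `X` and a subgroup `H ≤ G` whose coset boundaries are
pairwise disjoint or equal: (a) dynamical quasiconvexity of `H` implies topological
quasiconvexity of the relation identifying the points of each `∂(gH)`; (b) if
moreover `∂(gH) ≠ ∂(H)` for all `g ∉ H`, then the converse holds. -/
theorem dynQC_and_topQuasiconvex {G X : Type*} [Group G]
    [UniformSpace X] [CompactSpace X] [T2Space X]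
    [MulAction G X] [ContinuousConstSMul G X]
    (M : BoundaryModel G X) (hpersp : M.Perspective) (H : Subgroup G)
    (hdisj : ∀ g₁ g₂ : G,
      Disjoint (M.bd (g₁ • (H : Set G))) (M.bd (g₂ • (H : Set G))) ∨
        M.bd (g₁ • (H : Set G)) = M.bd (g₂ • (H : Set G))) :
    (M.DynQC H →
      TopQuasiconvex (fun x y : X =>
        x = y ∨ ∃ g : G, x ∈ M.bd (g • (H : Set G)) ∧ y ∈ M.bd (g • (H : Set G)))) ∧
    ((∀ g : G, g ∉ H → M.bd (g • (H : Set G)) ≠ M.bd (H : Set G)) →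
      TopQuasiconvex (fun x y : X =>
        x = y ∨ ∃ g : G, x ∈ M.bd (g • (H : Set G)) ∧ y ∈ M.bd (g • (H : Set G))) →
      M.DynQC H) := by
  classical
  -- the equivalence class of a point lying on some coset boundary
  have hclass1 : ∀ (x : X) (g : G), x ∈ M.bd (g • (H : Set G)) →
      {y : X | x = y ∨ ∃ g' : G, x ∈ M.bd (g' • (H : Set G)) ∧
        y ∈ M.bd (g' • (H : Set G))} = M.bd (g • (H : Set G)) := by
    intro x g hg
    ext y
    simp only [Set.mem_setOf_eq]
    constructor
    · rintro (rfl | ⟨g', h1, h2⟩)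
      · exact hg
      · rcases hdisj g' g with hd | heq
        · exact (Set.disjoint_left.mp hd h1 hg).elim
        · exact heq ▸ h2
    · intro hy
      exact Or.inr ⟨g, hg, hy⟩
  -- the equivalence class of any other point
  have hclass2 : ∀ x : X, (¬ ∃ g : G, x ∈ M.bd (g • (H : Set G))) →
      {y : X | x = y ∨ ∃ g' : G, x ∈ M.bd (g' • (H : Set G)) ∧
        y ∈ M.bd (g' • (H : Set G))} = {x} := by
    intro x hx
    ext y
    simp only [Set.mem_setOf_eq, Set.mem_singleton_iff]
    constructor
    · rintro (rfl | ⟨g, h1, _⟩)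
      · rfl
      · exact (hx ⟨g, h1⟩).elim
    · rintro rfl
      exact Or.inl rfl
  -- a well-defined boundary map on the quotient
  set f : G ⧸ H → Set X := fun q => M.bd (q.out • (H : Set G)) with hfdef
  have hf : ∀ g : G, f (QuotientGroup.mk g) = M.bd (g • (H : Set G)) := by
    intro g
    simp only [hfdef]
    rw [coset_eq_of_mk_eq (QuotientGroup.out_eq' (QuotientGroup.mk g))]
  constructor
  · -- (a) dynamical quasiconvexity implies topological quasiconvexity
    intro hdyn
    constructor
    · intro x
      by_cases hx : ∃ g : G, x ∈ M.bd (g • (H : Set G))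
      · obtain ⟨g, hg⟩ := hx
        show IsClosed {y : X | x = y ∨ ∃ g' : G, x ∈ M.bd (g' • (H : Set G)) ∧
          y ∈ M.bd (g' • (H : Set G))}
        rw [hclass1 x g hg]
        exact M.bd_closed _
      · show IsClosed {y : X | x = y ∨ ∃ g' : G, x ∈ M.bd (g' • (H : Set G)) ∧
          y ∈ M.bd (g' • (H : Set G))}
        rw [hclass2 x hx]
        exact isClosed_singleton
    · intro u hu
      refine ((hdyn u hu).image f).subset ?_
      rintro C ⟨⟨x, rfl⟩, hC⟩
      have hC' : ¬ ({y : X | x = y ∨ ∃ g' : G, x ∈ M.bd (g' • (H : Set G)) ∧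
          y ∈ M.bd (g' • (H : Set G))} ×ˢ
          {y : X | x = y ∨ ∃ g' : G, x ∈ M.bd (g' • (H : Set G)) ∧
          y ∈ M.bd (g' • (H : Set G))}) ⊆ u := hC
      by_cases hx : ∃ g : G, x ∈ M.bd (g • (H : Set G))
      · obtain ⟨g, hg⟩ := hx
        rw [hclass1 x g hg] at hC'
        refine ⟨QuotientGroup.mk g, ⟨g, hC', rfl⟩, ?_⟩
        rw [hf]
        exact (hclass1 x g hg).symm
      · exfalso
        apply hC'
        rw [hclass2 x hx]
        intro p hp
        have h1 : p.1 = x := hp.1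
        have h2 : p.2 = x := hp.2
        have hpx : p = (x, x) := Prod.ext h1 h2
        rw [hpx]
        exact refl_mem_uniformity hu
  · -- (b) the converse
    intro hne htop u hu
    have hinj : Function.Injective f := by
      intro q₁ q₂ hq
      rw [← QuotientGroup.out_eq' q₁, ← QuotientGroup.out_eq' q₂]
      set a := q₁.out
      set b := q₂.out
      by_contra hab
      have hm : a⁻¹ * b ∉ H := fun h => hab (QuotientGroup.eq.mpr h)
      have hq' : a • M.bd (H : Set G) = b • M.bd (H : Set G) := by
        have := hq
        simp only [hfdef] at this
        rwa [M.bd_smul, M.bd_smul] at this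
      apply hne _ hm
      rw [M.bd_smul]
      calc (a⁻¹ * b) • M.bd (H : Set G) = a⁻¹ • (b • M.bd (H : Set G)) :=
            mul_smul _ _ _
        _ = a⁻¹ • (a • M.bd (H : Set G)) := by rw [hq']
        _ = M.bd (H : Set G) := inv_smul_smul _ _
    refine Set.Finite.of_finite_image ?_ hinj.injOn
    refine (htop.2 u hu).subset ?_
    rintro C ⟨q, ⟨g, hg, rfl⟩, rfl⟩
    have hg' : ¬ (M.bd (g • (H : Set G))) ×ˢ (M.bd (g • (H : Set G))) ⊆ u := hg
    have hnonempty : (M.bd (g • (H : Set G))).Nonempty := by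
      by_contra h
      rw [Set.not_nonempty_iff_eq_empty] at h
      apply hg'
      rw [h]
      simp
    obtain ⟨x, hx⟩ := hnonempty
    rw [hf]
    exact ⟨⟨x, (hclass1 x g hx).symm⟩, hg'⟩
end

section
/- Let a boundary compactification model of a group G on a compact Hausdorff space X be given. Let p ∈ Y = X ∖ ι(G) be a bounded parabolic point of the action of G on X and assume p is not an isolated point of X. Then ∂(Stab p) = {p}, i.e. closure(ι(Stab p)) ∩ Y = {p} (equivalently, closure(ι(Stab p)) = ι(Stab p) ∪ {p}). -/
open Pointwise

/-- A point `p` of a `G`-space `W` is *bounded parabolic* if its stabilizer acts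
properly discontinuously and cocompactly on `W ∖ {p}`. -/
def BoundedParabolic (G : Type*) {W : Type*} [Group G] [TopologicalSpace W]
    [MulAction G W] (p : W) : Prop :=
  (∀ K L : Set W, IsCompact K → IsCompact L → p ∉ K → p ∉ L →
      {g : G | g ∈ MulAction.stabilizer G p ∧ ((g • K) ∩ L).Nonempty}.Finite) ∧
  ∃ K : Set W, IsCompact K ∧ p ∉ K ∧ (⋃ g ∈ MulAction.stabilizer G p, g • K) = {p}ᶜ

open Topology Filter

/-!
A boundary point `q ≠ p` in the closure of `ι(Stab p)` would have a compact neighbourhood `L`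
avoiding `p`; proper discontinuity of `Stab p` on `X ∖ {p}` (applied to `{ι 1}` and `L`) makes
`ι(Stab p) ∩ L` finite, so `q` would lie in `ι(G)`. Conversely `Stab p` is infinite, since
otherwise cocompactness would make `X ∖ {p}` compact, hence closed, and `p` isolated. So
`ι(Stab p)` accumulates somewhere in the compact space `X`, necessarily off the discrete set
`ι(G)`, that is, at `p`.
-/

theorem mem_of_mem_closure_of_finite_inter {X : Type*} [TopologicalSpace X] [T1Space X]
    {A L : Set X} {q : X} (hq : q ∈ closure A) (hL : L ∈ 𝓝 q) (hfin : (A ∩ L).Finite) :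
    q ∈ A := by
  have hqAL : q ∈ closure (A ∩ L) := mem_closure_iff_nhds.mpr fun t ht => by
    obtain ⟨x, ⟨hxt, hxL⟩, hxA⟩ := mem_closure_iff_nhds.mp hq (t ∩ L) (inter_mem ht hL)
    exact ⟨x, hxt, hxA, hxL⟩
  exact (hfin.isClosed.closure_eq ▸ hqAL).1

namespace BoundedParabolic

variable {G W : Type*} [Group G] [TopologicalSpace W] [MulAction G W] {p : W}

theorem finite_setOf_smul_mem (hbp : BoundedParabolic G p) {x : W} (hx : x ≠ p)
    {L : Set W} (hL : IsCompact L) (hpL : p ∉ L) :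
    {g : G | g ∈ MulAction.stabilizer G p ∧ g • x ∈ L}.Finite :=
  (hbp.1 {x} L isCompact_singleton hL (Ne.symm hx) hpL).subset
    fun g ⟨hg, hgx⟩ => ⟨hg, g • x, by simp, hgx⟩

theorem infinite_stabilizer [T2Space W] [ContinuousConstSMul G W]
    (hbp : BoundedParabolic G p) (hiso : ¬IsOpen ({p} : Set W)) :
    (MulAction.stabilizer G p : Set G).Infinite := by
  intro hfin
  obtain ⟨K, hK, -, hcover⟩ := hbp.2
  have hcompact : IsCompact ({p}ᶜ : Set W) :=
    hcover ▸ hfin.isCompact_biUnion fun g _ => hK.smul g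
  exact hiso (by simpa using hcompact.isClosed.isOpen_compl)

end BoundedParabolic

namespace BoundaryModel

variable {G X : Type*} [Group G] [TopologicalSpace X] [MulAction G X]

theorem not_accPt_range (M : BoundaryModel G X) (g : G) :
    ¬AccPt (M.emb g) (𝓟 (Set.range M.emb)) := by
  obtain ⟨U, hU, hUrange⟩ := M.discrete_range g
  have hgU : M.emb g ∈ U := (hUrange.ge rfl).1
  intro hacc
  obtain ⟨y, hy, hyg⟩ := accPt_iff_nhds.mp hacc U (hU.mem_nhds hgU)
  exact hyg (by simpa [hUrange] using hy)

theorem eq_of_mem_closure_stabilizer [LocallyCompactSpace X] [T1Space X]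
    (M : BoundaryModel G X) {p q : X} (hp : p ∉ Set.range M.emb) (hbp : BoundedParabolic G p)
    (hq : q ∈ closure (M.emb '' (MulAction.stabilizer G p : Set G)))
    (hqY : q ∉ Set.range M.emb) : q = p := by
  by_contra hqp
  obtain ⟨L, hLq, hLp, hL⟩ :=
    local_compact_nhds (isOpen_compl_singleton.mem_nhds hqp : {p}ᶜ ∈ 𝓝 q)
  have hfin : (M.emb '' (MulAction.stabilizer G p : Set G) ∩ L).Finite := by
    refine ((hbp.finite_setOf_smul_mem (x := M.emb 1) (fun h => hp ⟨1, h⟩) hL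
      fun h => hLp h rfl).image M.emb).subset ?_
    rintro _ ⟨⟨g, hg, rfl⟩, hgL⟩
    exact ⟨g, ⟨hg, by rwa [M.smul_emb, mul_one]⟩, rfl⟩
  obtain ⟨g, -, rfl⟩ := mem_of_mem_closure_of_finite_inter hq hLq hfin
  exact hqY ⟨g, rfl⟩

end BoundaryModel

/-- In a boundary compactification model of `G` on a compact
Hausdorff space `X`, if `p ∈ Y = X ∖ emb(G)` is a bounded parabolic point that is not
isolated in `X`, then `∂(Stab p) = {p}`. -/
theorem bd_stabilizer_of_boundedParabolic {G X : Type*} [Group G]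
    [TopologicalSpace X] [CompactSpace X] [T2Space X]
    [MulAction G X] [ContinuousConstSMul G X]
    (M : BoundaryModel G X) (p : X) (hp : p ∉ Set.range M.emb)
    (hbp : BoundedParabolic G p) (hiso : ¬IsOpen ({p} : Set X)) :
    closure (M.emb '' (MulAction.stabilizer G p : Set G)) ∩ (Set.range M.emb)ᶜ
      = {p} := by
  obtain ⟨q, hqA⟩ := ((hbp.infinite_stabilizer hiso).image M.inj.injOn).exists_accPt_principal
  have hq : q ∈ closure (M.emb '' (MulAction.stabilizer G p : Set G)) :=
    mem_closure_iff_clusterPt.mpr hqA.clusterPt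
  have hqY : q ∉ Set.range M.emb := by
    rintro ⟨g, rfl⟩
    exact M.not_accPt_range g (hqA.mono (principal_mono.mpr (Set.image_subset_range _ _)))
  obtain rfl : q = p := M.eq_of_mem_closure_stabilizer hp hbp hq hqY
  exact Set.eq_singleton_iff_unique_mem.mpr
    ⟨⟨hq, hp⟩, fun x hx => M.eq_of_mem_closure_stabilizer hp hbp hx.1 hx.2⟩
end

section
/- Let a boundary compactification model of a group G on a compact metrizable space X be given, and let p ∈ Y = X ∖ ι(G). Assume that Stab p acts cocompactly on Y ∖ {p} (there is a compact K ⊆ Y ∖ {p} with (Stab p)·K = Y ∖ {p}). Then Stab p acts cocompactly on X ∖ {p} if and only if there is no subset S ⊆ G with (Stab p)·S = S that meets infinitely many distinct right cosets (Stab p)g and satisfies ∂(S) = {p}. -/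
/-! Write `H = Stab p`. An `H`-invariant `S ⊆ G` meeting only finitely many cosets `Hg` is
`H · F` with `F` finite, and an infinite `S` has a boundary point because `emb(G)` is
discrete in the compact space `X`.

If `K` is a compact fundamental set for `X ∖ {p}` and `S` is as in the statement, every
element of `S` has an `H`-translate in `S ∩ emb⁻¹(K)`, so this set meets infinitely many
cosets and has a boundary point in `∂(S) ∩ K = {p} ∩ K = ∅`.

Conversely, let `K₀` be a compact fundamental set for `Y ∖ {p}`, pick a closed neighbourhood
`V` of `p` missing `K₀`, and let `S` consist of the `g` with `emb(Hg) ⊆ V`. As `∂(S)` is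
`H`-invariant and lies in `V`, and every point of `Y ∖ {p}` has a translate in `K₀`, we get
`∂(S) ⊆ {p}`. Hence `S` meets only finitely many cosets, `S = H · F`, and
`K₀ ∪ (interior V)ᶜ ∪ emb(F)` is a compact fundamental set for `X ∖ {p}`. -/

open Pointwise

section Cosets

variable {G : Type*} [Group G] {H : Subgroup G}

lemma Subgroup.mul_mem_of_mul_eq {S : Set G} (hS : (H : Set G) * S = S) {h g : G}
    (hh : h ∈ H) (hg : g ∈ S) : h * g ∈ S :=
  hS ▸ Set.mul_mem_mul hh hg

lemma Subgroup.smul_set_subset_of_mul_eq {S : Set G} (hS : (H : Set G) * S = S) {h : G}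
    (hh : h ∈ H) : h • S ⊆ S :=
  (Set.smul_set_subset_mul hh).trans hS.subset

lemma QuotientGroup.image_mk_rightRel_subset_of_subset_mul {S E : Set G}
    (hSE : S ⊆ (H : Set G) * E) :
    Quotient.mk (QuotientGroup.rightRel H) '' S ⊆ Quotient.mk (QuotientGroup.rightRel H) '' E := by
  rintro _ ⟨_, hg, rfl⟩
  obtain ⟨h, hh, e, he, rfl⟩ := hSE hg
  refine ⟨e, he, Quotient.sound ?_⟩
  simpa [QuotientGroup.rightRel_apply] using hh

lemma QuotientGroup.exists_finite_subset_mul_of_finite_image_mk_rightRel {S : Set G}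
    (hS : (Quotient.mk (QuotientGroup.rightRel H) '' S).Finite) :
    ∃ F : Set G, F.Finite ∧ S ⊆ (H : Set G) * F := by
  obtain ⟨F, hF, hinj⟩ := Set.exists_image_eq_and_injOn S
    (Quotient.mk (QuotientGroup.rightRel H))
  refine ⟨F, Set.Finite.of_finite_image (hF ▸ hS) hinj, fun g hg => ?_⟩
  obtain ⟨f, hf, hfg⟩ : Quotient.mk _ g ∈ Quotient.mk (QuotientGroup.rightRel H) '' F :=
    hF ▸ ⟨g, hg, rfl⟩
  have hgf : g * f⁻¹ ∈ H := QuotientGroup.rightRel_apply.mp (Quotient.exact hfg)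
  exact ⟨g * f⁻¹, hgf, f, hf, inv_mul_cancel_right g f⟩

end Cosets

lemma MulAction.stabilizer_smul_subset_compl_singleton {G X : Type*} [Group G] [MulAction G X]
    {p : X} {K : Set X} (hpK : p ∉ K) : (MulAction.stabilizer G p : Set G) • K ⊆ {p}ᶜ := by
  rintro _ ⟨h, hh, k, hk, rfl⟩ (hkp : h • k = p)
  rw [smul_eq_iff_eq_inv_smul, (MulAction.mem_stabilizer_iff).mp (inv_mem hh)] at hkp
  exact hpK (hkp ▸ hk)

namespace BoundaryModel

variable {G X : Type*} [Group G] [TopologicalSpace X] [MulAction G X] (M : BoundaryModel G X)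

/-- The boundary `∂(S)` of `S ⊆ G`. -/
def boundary (S : Set G) : Set X := closure (M.emb '' S) ∩ (Set.range M.emb)ᶜ

lemma isDiscrete_range : IsDiscrete (Set.range M.emb) :=
  isDiscrete_iff_forall_mem_exists_isOpen.mpr <| by
    rintro _ ⟨g, rfl⟩
    exact M.discrete_range g

lemma boundary_mono {S T : Set G} (hST : S ⊆ T) : M.boundary S ⊆ M.boundary T :=
  Set.inter_subset_inter_left _ (closure_mono (Set.image_mono hST))

lemma boundary_subset_of_isClosed {S : Set G} {V : Set X} (hV : IsClosed V)
    (hSV : M.emb '' S ⊆ V) : M.boundary S ⊆ V :=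
  Set.inter_subset_left.trans (closure_minimal hSV hV)

lemma boundary_nonempty_of_infinite [CompactSpace X] {S : Set G} (hS : S.Infinite) :
    (M.boundary S).Nonempty := by
  by_contra hempty
  have hsub : closure (M.emb '' S) ⊆ Set.range M.emb := fun x hx =>
    by_contra fun hx' => hempty ⟨x, hx, hx'⟩
  have hfin : (closure (M.emb '' S)).Finite :=
    isClosed_closure.isCompact.finite (M.isDiscrete_range.mono hsub)
  exact (hS.image M.inj.injOn).mono subset_closure hfin

lemma emb_image_smul (g : G) (S : Set G) : M.emb '' (g • S) = g • M.emb '' S := by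
  simp only [← Set.image_smul, Set.image_image, M.smul_emb, smul_eq_mul]

lemma smul_range_s15 (g : G) : g • Set.range M.emb = Set.range M.emb := by
  rw [← Set.image_univ, ← emb_image_smul, Set.smul_set_univ]

lemma boundary_smul [ContinuousConstSMul G X] (g : G) (S : Set G) :
    M.boundary (g • S) = g • M.boundary S := by
  rw [boundary, boundary, Set.smul_set_inter, Set.smul_set_compl, M.smul_range_s15,
    ← closure_smul, emb_image_smul]

lemma smul_mem_boundary [ContinuousConstSMul G X] {H : Subgroup G} {S : Set G}
    (hS : (H : Set G) * S = S) {h : G} (hh : h ∈ H) {x : X} (hx : x ∈ M.boundary S) :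
    h • x ∈ M.boundary S :=
  M.boundary_mono (Subgroup.smul_set_subset_of_mul_eq hS hh)
    ((M.boundary_smul h S).superset (Set.smul_mem_smul_set hx))

lemma exists_mem_boundary_inter_of_subset_smul [CompactSpace X] {H : Subgroup G} {S : Set G}
    {K : Set X} (hK : IsClosed K) (hHS : (H : Set G) * S = S)
    (hS : (Quotient.mk (QuotientGroup.rightRel H) '' S).Infinite)
    (hSK : M.emb '' S ⊆ (H : Set G) • K) : (M.boundary S ∩ K).Nonempty := by
  set E := S ∩ M.emb ⁻¹' K
  have hSE : S ⊆ (H : Set G) * E := by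
    intro g hg
    obtain ⟨h, hh, k, hk, hkg⟩ := hSK ⟨g, hg, rfl⟩
    have hk' : M.emb (h⁻¹ * g) = k := by rw [← M.smul_emb, ← hkg, inv_smul_smul]
    have hgE : h⁻¹ * g ∈ E :=
      ⟨Subgroup.mul_mem_of_mul_eq hHS (inv_mem hh) hg, show M.emb _ ∈ K from hk' ▸ hk⟩
    exact ⟨h, hh, h⁻¹ * g, hgE, mul_inv_cancel_left h g⟩
  have hE : E.Infinite :=
    (hS.mono (QuotientGroup.image_mk_rightRel_subset_of_subset_mul hSE)).of_image _
  obtain ⟨x, hx⟩ := M.boundary_nonempty_of_infinite hE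
  refine ⟨x, M.boundary_mono Set.inter_subset_left hx, M.boundary_subset_of_isClosed hK ?_ hx⟩
  rintro _ ⟨g, hg, rfl⟩
  exact hg.2

/-- The largest `H`-invariant subset of `emb ⁻¹' U`. -/
def invariantCore (H : Subgroup G) (U : Set X) : Set G := {g | ∀ h ∈ H, M.emb (h * g) ∈ U}

variable {H : Subgroup G} {U : Set X}

lemma mul_invariantCore : (H : Set G) * M.invariantCore H U = M.invariantCore H U := by
  refine (Set.mul_subset_iff.mpr fun h hh g hg k hk => ?_).antisymm
    fun g hg => ⟨1, H.one_mem, g, hg, one_mul g⟩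
  simpa only [mul_assoc] using hg (k * h) (H.mul_mem hk hh)

lemma emb_image_invariantCore_subset : M.emb '' M.invariantCore H U ⊆ U := by
  rintro _ ⟨g, hg, rfl⟩
  simpa using hg 1 H.one_mem

lemma range_subset_smul_union_compl {F : Set G} (hF : M.invariantCore H U ⊆ (H : Set G) * F) :
    Set.range M.emb ⊆ (H : Set G) • (M.emb '' F ∪ Uᶜ) := by
  rintro _ ⟨g, rfl⟩
  by_cases hg : g ∈ M.invariantCore H U
  · obtain ⟨h, hh, f, hf, rfl⟩ := hF hg
    exact ⟨h, hh, M.emb f, Or.inl ⟨f, hf, rfl⟩, M.smul_emb h f⟩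
  · obtain ⟨h, hh, hout⟩ : ∃ h ∈ H, M.emb (h * g) ∉ U := by
      simpa [invariantCore] using hg
    exact ⟨h⁻¹, inv_mem hh, M.emb (h * g), Or.inr hout,
      (M.smul_emb _ _).trans (congrArg M.emb (inv_mul_cancel_left h g))⟩

lemma boundary_invariantCore_subset_singleton [ContinuousConstSMul G X] {p : X} {K₀ : Set X}
    (hK₀ : (Set.range M.emb)ᶜ \ {p} ⊆ (H : Set G) • K₀) (hU : IsClosed U)
    (hUK₀ : Disjoint U K₀) : M.boundary (M.invariantCore H U) ⊆ {p} := by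
  intro z hz
  by_contra hzp
  obtain ⟨h, hh, k, hk, rfl⟩ := hK₀ ⟨hz.2, hzp⟩
  have hkS : k ∈ M.boundary (M.invariantCore H U) := by
    simpa using M.smul_mem_boundary M.mul_invariantCore (inv_mem hh) hz
  exact hUK₀.notMem_of_mem_left
    (M.boundary_subset_of_isClosed hU M.emb_image_invariantCore_subset hkS) hk

lemma exists_isCompact_stabilizer_smul_eq_compl_singleton [CompactSpace X] {p : X}
    (hp : p ∉ Set.range M.emb) {K₀ V : Set X} {F : Set G} (hK₀ : IsCompact K₀) (hpK₀ : p ∉ K₀)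
    (hK₀cov : (Set.range M.emb)ᶜ \ {p} ⊆ (MulAction.stabilizer G p : Set G) • K₀)
    (hVp : V ∈ nhds p) (hF : F.Finite)
    (hSF : M.invariantCore (MulAction.stabilizer G p) V ⊆ (MulAction.stabilizer G p : Set G) * F) :
    ∃ K : Set X, IsCompact K ∧ p ∉ K ∧ (MulAction.stabilizer G p : Set G) • K = {p}ᶜ := by
  set K := K₀ ∪ (interior V)ᶜ ∪ M.emb '' F
  have hpK : p ∉ K := by
    rintro ((h | h) | ⟨g, -, hg⟩)
    exacts [hpK₀ h, h (mem_interior_iff_mem_nhds.mpr hVp), hp ⟨g, hg⟩]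
  refine ⟨K, (hK₀.union isOpen_interior.isClosed_compl.isCompact).union (hF.image _).isCompact,
    hpK, (MulAction.stabilizer_smul_subset_compl_singleton hpK).antisymm fun x hx => ?_⟩
  by_cases hxr : x ∈ Set.range M.emb
  · refine Set.smul_subset_smul_left ?_ (M.range_subset_smul_union_compl hSF hxr)
    exact Set.union_subset Set.subset_union_right
      ((Set.compl_subset_compl.mpr interior_subset).trans
        (Set.subset_union_right.trans Set.subset_union_left))
  · exact Set.smul_subset_smul_left (Set.subset_union_left.trans Set.subset_union_left)
      (hK₀cov ⟨hxr, hx⟩)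

end BoundaryModel

/-- Let a boundary compactification model of `G` on a compact
metrizable space `X` be given and `p ∈ Y = X ∖ emb(G)`. If `Stab p` acts cocompactly
on `Y ∖ {p}`, then `Stab p` acts cocompactly on `X ∖ {p}` if and only if there is no
`Stab p`-invariant set `S ⊆ G` meeting infinitely many right cosets `(Stab p)g` with
`∂(S) = {p}`. -/
theorem cocompact_iff_no_invariant_set {G X : Type*} [Group G]
    [TopologicalSpace X] [CompactSpace X] [TopologicalSpace.MetrizableSpace X]
    [MulAction G X] [ContinuousConstSMul G X]
    (M : BoundaryModel G X) (p : X) (hp : p ∉ Set.range M.emb)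
    (hcoY : ∃ K : Set X, IsCompact K ∧ K ⊆ (Set.range M.emb)ᶜ \ {p} ∧
        (⋃ g ∈ MulAction.stabilizer G p, g • K) = (Set.range M.emb)ᶜ \ {p}) :
    (∃ K : Set X, IsCompact K ∧ p ∉ K ∧
        (⋃ g ∈ MulAction.stabilizer G p, g • K) = {p}ᶜ) ↔
      ¬∃ S : Set G, (MulAction.stabilizer G p : Set G) * S = S ∧
        ((Quotient.mk (QuotientGroup.rightRel (MulAction.stabilizer G p))) ''
            S).Infinite ∧
        closure (M.emb '' S) ∩ (Set.range M.emb)ᶜ = {p} := by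
  set H := MulAction.stabilizer G p
  simp only [← SetLike.mem_coe, Set.iUnion_smul_set] at hcoY ⊢
  constructor
  · rintro ⟨K, hK, hpK, hcov⟩ ⟨S, hHS, hinf, hbd⟩
    have hSK : M.emb '' S ⊆ (H : Set G) • K := by
      rw [hcov]
      rintro _ ⟨g, -, rfl⟩ hg
      exact hp ⟨g, hg⟩
    obtain ⟨x, hxS, hxK⟩ := M.exists_mem_boundary_inter_of_subset_smul hK.isClosed hHS hinf hSK
    rw [BoundaryModel.boundary, hbd] at hxS
    exact hpK (hxS ▸ hxK)
  · rintro hno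
    obtain ⟨K₀, hK₀, hK₀Y, hK₀cov⟩ := hcoY
    have hpK₀ : p ∉ K₀ := fun h => (hK₀Y h).2 rfl
    obtain ⟨V, hVp, hV, hVK₀⟩ :=
      exists_mem_nhds_isClosed_subset (hK₀.isClosed.isOpen_compl.mem_nhds hpK₀)
    have hbd : M.boundary (M.invariantCore H V) ⊆ {p} :=
      M.boundary_invariantCore_subset_singleton hK₀cov.superset hV
        (Set.subset_compl_iff_disjoint_right.mp hVK₀)
    have hfin : (Quotient.mk (QuotientGroup.rightRel H) '' M.invariantCore H V).Finite := by
      by_contra hinf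
      obtain ⟨x, hx⟩ := M.boundary_nonempty_of_infinite (Set.Infinite.of_image _ hinf)
      exact hno ⟨_, M.mul_invariantCore, hinf,
        hbd.antisymm (Set.singleton_subset_iff.mpr (hbd hx ▸ hx))⟩
    obtain ⟨F, hF, hSF⟩ := QuotientGroup.exists_finite_subset_mul_of_finite_image_mk_rightRel hfin
    exact M.exists_isCompact_stabilizer_smul_eq_compl_singleton hp hK₀ hpK₀ hK₀cov.superset hVp
      hF hSF
end

section
/- Let G be a group acting by homeomorphisms on compact Hausdorff spaces W₁ and W₂, and let A₁ ⊆ W₁ and A₂ ⊆ W₂ be open G-invariant subsets on which G acts properly discontinuously (for all compact K, L contained in A_i, the set {g ∈ G : g·K ∩ L ≠ ∅} is finite) and cocompactly (there is a compact K ⊆ A_i with G·K = A_i). Say the pair (W_i, A_i) is perspective if for every entourage u of the unique uniform structure of W_i and every compact K ⊆ A_i, the set {g ∈ G : g·K is not u-small} is finite (a set S is u-small if S × S ⊆ u). Let f : W₁ → W₂ be a continuous G-equivariant map with f(A₁) ⊆ A₂ that is injective on W₁ ∖ A₁. If (W₂, A₂) is perspective, then (W₁, A₁) is perspective. -/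
/-!
Suppose infinitely many translates `g • K` of a compact `K ⊆ A₁` are not `u`-small, and pick
witness pairs `(x_g, y_g) ∉ u` in them. Along an ultrafilter finer than the cofinite filter the
pairs converge to some `(x₀, y₀)`. Proper discontinuity pushes both limits out of `A₁`, while
perspectivity of `(W₂, A₂)` shrinks the translates `g • f(K)` to points, so `f x₀ = f y₀`.
Injectivity of `f` off `A₁` gives `x₀ = y₀`, contradicting `(x_g, y_g) ∉ u`.
-/

open Pointwise Filter Topology Uniformity

/-- The pair `(W, A)` (a `G`-space `W` with an invariant subset `A` on which `G` acts
properly discontinuously and cocompactly) is *perspective* if for every entourage `u`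
of the (unique) uniform structure of `W` and every compact `K ⊆ A`, only finitely
many `g ∈ G` have `g • K` not `u`-small (`S` is `u`-small if `S ×ˢ S ⊆ u`). -/
def PerspectivePair (G : Type*) {W : Type*} [Group G] [UniformSpace W]
    [MulAction G W] (A : Set W) : Prop :=
  ∀ u ∈ uniformity W, ∀ K : Set W, IsCompact K → K ⊆ A →
    {g : G | ¬(g • K) ×ˢ (g • K) ⊆ u}.Finite

section

variable {ι G W : Type*} [Group G] [MulAction G W]

theorem notMem_of_tendsto_of_eventually_mem_smul [TopologicalSpace W] [LocallyCompactSpace W]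
    {A K : Set W} (hA : IsOpen A)
    (hpd : ∀ L : Set W, IsCompact L → L ⊆ A → {g : G | ((g • K) ∩ L).Nonempty}.Finite)
    {l : Filter ι} [l.NeBot] {σ : ι → G} (hσ : Tendsto σ l cofinite)
    {z : ι → W} (hz : ∀ᶠ i in l, z i ∈ σ i • K) {z₀ : W} (hz₀ : Tendsto z l (𝓝 z₀)) :
    z₀ ∉ A := by
  intro hz₀A
  obtain ⟨L, hL, hLA, hLc⟩ := local_compact_nhds (hA.mem_nhds hz₀A)
  have hfar : ∀ᶠ i in l, σ i ∉ {g : G | ((g • K) ∩ L).Nonempty} :=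
    hσ.eventually (hpd L hLc hLA).eventually_cofinite_notMem
  obtain ⟨i, hiK, hiL, hiFar⟩ := (hz.and ((hz₀.eventually_mem hL).and hfar)).exists
  exact hiFar ⟨z i, hiK, hiL⟩

namespace PerspectivePair

variable [UniformSpace W] {A K : Set W}

theorem tendsto_uniformity (hp : PerspectivePair G A) (hK : IsCompact K) (hKA : K ⊆ A)
    {l : Filter ι} {σ : ι → G} (hσ : Tendsto σ l cofinite) {z w : ι → W}
    (hz : ∀ᶠ i in l, z i ∈ σ i • K) (hw : ∀ᶠ i in l, w i ∈ σ i • K) :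
    Tendsto (fun i => (z i, w i)) l (𝓤 W) := by
  intro u hu
  rw [mem_map]
  have hsmall := hσ.eventually (hp u hu K hK hKA).eventually_cofinite_notMem
  filter_upwards [hsmall, hz, hw] with i hi hzi hwi
  exact not_not.mp hi (Set.mk_mem_prod hzi hwi)

theorem eq_of_tendsto [T2Space W] (hp : PerspectivePair G A) (hK : IsCompact K) (hKA : K ⊆ A)
    {l : Filter ι} [l.NeBot] {σ : ι → G} (hσ : Tendsto σ l cofinite) {z w : ι → W}
    (hz : ∀ᶠ i in l, z i ∈ σ i • K) (hw : ∀ᶠ i in l, w i ∈ σ i • K)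
    {a b : W} (ha : Tendsto z l (𝓝 a)) (hb : Tendsto w l (𝓝 b)) : a = b :=
  tendsto_nhds_unique (ha.congr_uniformity (hp.tendsto_uniformity hK hKA hσ hz hw)) hb

end PerspectivePair

theorem mem_smul_image_of_mem_smul {V : Type*} [MulAction G V] {f : W → V}
    (hf : ∀ (g : G) (x : W), f (g • x) = g • f x) {g : G} {K : Set W} {x : W}
    (hx : x ∈ g • K) : f x ∈ g • f '' K := by
  obtain ⟨k, hk, rfl⟩ := hx
  exact ⟨f k, Set.mem_image_of_mem f hk, (hf g k).symm⟩

end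

theorem perspective_pullback_general {G W₁ W₂ : Type*} [Group G]
    [UniformSpace W₁] [CompactSpace W₁]
    [UniformSpace W₂] [T2Space W₂]
    [MulAction G W₁] [MulAction G W₂]
    (A₁ : Set W₁) (A₂ : Set W₂)
    (hA₁open : IsOpen A₁)
    (hpd₁ : ∀ K L : Set W₁, IsCompact K → IsCompact L → K ⊆ A₁ → L ⊆ A₁ →
      {g : G | ((g • K) ∩ L).Nonempty}.Finite)
    (f : W₁ → W₂) (hfc : Continuous f)
    (hfe : ∀ (g : G) (x : W₁), f (g • x) = g • f x)
    (hfA : f '' A₁ ⊆ A₂) (hfinj : Set.InjOn f A₁ᶜ)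
    (hp₂ : PerspectivePair G A₂) :
    PerspectivePair G A₁ := by
  intro u hu K hK hKA
  by_contra hS
  set S := {g : G | ¬(g • K) ×ˢ (g • K) ⊆ u}
  have : Infinite S := Set.infinite_coe_iff.mpr hS
  choose p hpK hpu using fun g : S => Set.not_subset.mp g.2
  let U : Ultrafilter S := Ultrafilter.of cofinite
  have hσ : Tendsto ((↑) : S → G) U cofinite :=
    Subtype.val_injective.tendsto_cofinite.mono_left (Ultrafilter.of_le _)
  obtain ⟨⟨x₀, y₀⟩, hp₀⟩ : ∃ q, Tendsto p U (𝓝 q) := ⟨_, (U.map p).le_nhds_lim⟩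
  have hx : ∀ᶠ g : S in U, (p g).1 ∈ (g : G) • K := .of_forall fun g => (hpK g).1
  have hy : ∀ᶠ g : S in U, (p g).2 ∈ (g : G) • K := .of_forall fun g => (hpK g).2
  have hx₀ : x₀ ∉ A₁ := notMem_of_tendsto_of_eventually_mem_smul hA₁open
    (hpd₁ K · hK · hKA ·) hσ hx hp₀.fst_nhds
  have hy₀ : y₀ ∉ A₁ := notMem_of_tendsto_of_eventually_mem_smul hA₁open
    (hpd₁ K · hK · hKA ·) hσ hy hp₀.snd_nhds
  have hfxy : f x₀ = f y₀ :=
    hp₂.eq_of_tendsto (hK.image hfc) ((Set.image_mono hKA).trans hfA) hσ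
      (hx.mono fun _ => mem_smul_image_of_mem_smul hfe)
      (hy.mono fun _ => mem_smul_image_of_mem_smul hfe)
      ((hfc.tendsto x₀).comp hp₀.fst_nhds) ((hfc.tendsto y₀).comp hp₀.snd_nhds)
  obtain rfl : x₀ = y₀ := hfinj hx₀ hy₀ hfxy
  obtain ⟨g, hg⟩ := (hp₀.eventually_mem (nhds_le_uniformity x₀ hu)).exists
  exact hpu g hg

/-- Let `G` act by homeomorphisms on compact Hausdorff spaces
`W₁, W₂` with open invariant subsets `A₁, A₂` on which `G` acts properly
discontinuously and cocompactly, and let `f : W₁ → W₂` be continuous, equivariant,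
with `f(A₁) ⊆ A₂` and injective on `W₁ ∖ A₁`. If `(W₂, A₂)` is perspective then so is
`(W₁, A₁)`. -/
theorem perspective_pullback {G W₁ W₂ : Type*} [Group G]
    [UniformSpace W₁] [CompactSpace W₁] [T2Space W₁]
    [UniformSpace W₂] [CompactSpace W₂] [T2Space W₂]
    [MulAction G W₁] [MulAction G W₂]
    [ContinuousConstSMul G W₁] [ContinuousConstSMul G W₂]
    (A₁ : Set W₁) (A₂ : Set W₂)
    (hA₁open : IsOpen A₁) (hA₂open : IsOpen A₂)
    (hA₁inv : ∀ g : G, g • A₁ = A₁) (hA₂inv : ∀ g : G, g • A₂ = A₂)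
    (hpd₁ : ∀ K L : Set W₁, IsCompact K → IsCompact L → K ⊆ A₁ → L ⊆ A₁ →
      {g : G | ((g • K) ∩ L).Nonempty}.Finite)
    (hpd₂ : ∀ K L : Set W₂, IsCompact K → IsCompact L → K ⊆ A₂ → L ⊆ A₂ →
      {g : G | ((g • K) ∩ L).Nonempty}.Finite)
    (hcc₁ : ∃ K : Set W₁, IsCompact K ∧ K ⊆ A₁ ∧ (⋃ g : G, g • K) = A₁)
    (hcc₂ : ∃ K : Set W₂, IsCompact K ∧ K ⊆ A₂ ∧ (⋃ g : G, g • K) = A₂)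
    (f : W₁ → W₂) (hfc : Continuous f)
    (hfe : ∀ (g : G) (x : W₁), f (g • x) = g • f x)
    (hfA : f '' A₁ ⊆ A₂) (hfinj : Set.InjOn f A₁ᶜ)
    (hp₂ : PerspectivePair G A₂) :
    PerspectivePair G A₁ :=
  perspective_pullback_general A₁ A₂ hA₁open hpd₁ f hfc hfe hfA hfinj hp₂
end

section
/- Let G be a group acting by homeomorphisms on locally compact Hausdorff spaces Y and Z, and let f : Y → Z be a proper (preimages of compact sets are compact), continuous, surjective, G-equivariant map. Let p ∈ Z be a point such that f⁻¹({p}) consists of a single point y₀. Then p is a bounded parabolic point of Z if and only if y₀ is a bounded parabolic point of Y. -/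
open Pointwise

/-- Let `G` act by homeomorphisms on locally compact Hausdorff
spaces `Y` and `Z` and let `f : Y → Z` be a proper continuous surjective equivariant
map. If `p ∈ Z` has `f⁻¹({p}) = {y₀}` a single point, then `p` is bounded parabolic
if and only if `y₀` is bounded parabolic. -/
theorem boundedParabolic_iff_of_singleton_fiber {G Y Z : Type*} [Group G]
    [TopologicalSpace Y] [LocallyCompactSpace Y] [T2Space Y]
    [TopologicalSpace Z] [LocallyCompactSpace Z] [T2Space Z]
    [MulAction G Y] [MulAction G Z]
    [ContinuousConstSMul G Y] [ContinuousConstSMul G Z]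
    (f : Y → Z) (hcont : Continuous f)
    (hproper : ∀ K : Set Z, IsCompact K → IsCompact (f ⁻¹' K))
    (hsurj : Function.Surjective f)
    (hequiv : ∀ (g : G) (y : Y), f (g • y) = g • f y)
    (p : Z) (y₀ : Y) (hfib : f ⁻¹' {p} = {y₀}) :
    BoundedParabolic G p ↔ BoundedParabolic G y₀ := by
  have hfp : f y₀ = p := by
    have : y₀ ∈ f ⁻¹' {p} := by rw [hfib]; rfl
    simpa using this
  have hfiber : ∀ y : Y, f y = p → y = y₀ := by
    intro y hy
    have : y ∈ f ⁻¹' {p} := hy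
    rw [hfib] at this; exact this
  have hstab : ∀ g : G, g ∈ MulAction.stabilizer G p ↔ g ∈ MulAction.stabilizer G y₀ := by
    intro g
    constructor
    · intro hg
      have h1 : f (g • y₀) = p := by
        rw [hequiv, hfp]; exact hg
      exact hfiber _ h1
    · intro hg
      have : g • p = p := by
        rw [← hfp, ← hequiv, show g • y₀ = y₀ from hg]
      exact this
  have himg : ∀ (g : G) (K : Set Y), f '' (g • K) = g • (f '' K) := by
    intro g K
    ext z
    simp only [Set.mem_image, Set.mem_smul_set]
    constructor
    · rintro ⟨y, ⟨k, hk, rfl⟩, rfl⟩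
      exact ⟨f k, ⟨k, hk, rfl⟩, (hequiv g k).symm⟩
    · rintro ⟨z', ⟨k, hk, rfl⟩, rfl⟩
      exact ⟨g • k, ⟨k, hk, rfl⟩, hequiv g k⟩
  constructor
  · rintro ⟨hpd, K, hKc, hKp, hKcov⟩
    constructor
    · intro A B hA hB hyA hyB
      have hApre : p ∉ f '' A := by
        rintro ⟨a, ha, hfa⟩
        exact hyA (hfiber a hfa ▸ ha)
      have hBpre : p ∉ f '' B := by
        rintro ⟨b, hb, hfb⟩
        exact hyB (hfiber b hfb ▸ hb)
      refine (hpd (f '' A) (f '' B) (hA.image hcont) (hB.image hcont) hApre hBpre).subset ?_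
      rintro g ⟨hg, y, hy1, hy2⟩
      refine ⟨(hstab g).mpr hg, f y, ?_, Set.mem_image_of_mem f hy2⟩
      rw [← himg]; exact Set.mem_image_of_mem f hy1
    · refine ⟨f ⁻¹' K, hproper K hKc, ?_, ?_⟩
      · intro h
        exact hKp (hfp ▸ h)
      · ext y
        simp only [Set.mem_iUnion, Set.mem_compl_iff, Set.mem_singleton_iff]
        constructor
        · rintro ⟨g, hg, k, hk, rfl⟩ hgy
          have hg' : g • y₀ = y₀ := hg
          have : k = y₀ := by
            have h2 : k = g⁻¹ • y₀ := by rw [← hgy, inv_smul_smul]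
            have h3 : g⁻¹ • y₀ = y₀ := by
              conv_lhs => rw [← hg']
              rw [inv_smul_smul]
            rw [h2, h3]
          subst this
          exact hKp (hfp ▸ hk)
        · intro hy
          have hfy : f y ≠ p := fun h => hy (hfiber y h)
          have : f y ∈ ⋃ g ∈ MulAction.stabilizer G p, g • K := by
            rw [hKcov]; exact hfy
          simp only [Set.mem_iUnion] at this
          obtain ⟨g, hg, z, hz, hgz⟩ := this
          refine ⟨g, (hstab g).mp hg, g⁻¹ • y, ?_, by simp⟩
          have : f (g⁻¹ • y) = z := by
            rw [hequiv, ← hgz]; simp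
          simpa [this] using hz
  · rintro ⟨hpd, K, hKc, hKy, hKcov⟩
    constructor
    · intro A B hA hB hpA hpB
      have hyA : y₀ ∉ f ⁻¹' A := fun h => hpA (hfp ▸ h)
      have hyB : y₀ ∉ f ⁻¹' B := fun h => hpB (hfp ▸ h)
      refine (hpd (f ⁻¹' A) (f ⁻¹' B) (hproper A hA) (hproper B hB) hyA hyB).subset ?_
      rintro g ⟨hg, z, ⟨a, ha, rfl⟩, hz2⟩
      obtain ⟨y, rfl⟩ := hsurj a
      refine ⟨(hstab g).mp hg, g • y, ⟨y, ha, rfl⟩, ?_⟩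
      show f (g • y) ∈ B
      rw [hequiv]; exact hz2
    · refine ⟨f '' K, hKc.image hcont, ?_, ?_⟩
      · rintro ⟨k, hk, hfk⟩
        exact hKy (hfiber k hfk ▸ hk)
      · ext z
        simp only [Set.mem_iUnion, Set.mem_compl_iff, Set.mem_singleton_iff]
        constructor
        · rintro ⟨g, hg, w, ⟨k, hk, rfl⟩, rfl⟩ hgz
          have : f k = p := by
            have := congrArg (fun x => g⁻¹ • x) hgz
            simpa [show g⁻¹ • p = p from (MulAction.stabilizer G p).inv_mem hg] using this
          exact hKy (hfiber k this ▸ hk)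
        · intro hz
          obtain ⟨y, rfl⟩ := hsurj z
          have hy : y ≠ y₀ := fun h => hz (h ▸ hfp)
          have : y ∈ ⋃ g ∈ MulAction.stabilizer G y₀, g • K := by
            rw [hKcov]; exact hy
          simp only [Set.mem_iUnion] at this
          obtain ⟨g, hg, k, hk, rfl⟩ := this
          exact ⟨g, (hstab g).mpr hg, f k, ⟨k, hk, rfl⟩, (hequiv g k).symm⟩
end
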